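/- arXiv:2411.11051 — 2 statements merged into one kernel-verified Lean document; each statement's English description precedes it below -/
import Mathlib

section
/- Let Φ(x) = rank(x) be the potential function. For every nonempty rank-biased leftist heap x = ⟨t,a,u⟩, the amortized cost of delete-min, A(x) = T(t,u) + Φ(t∪u) − Φ(x), equals rank(t) + rank(t∪u) − 1 and is at most 2·log₂ s(x). -/
inductive BTree (α : Type) : Type
  | nil : BTree α
  | node : BTree α → α → BTree α → BTree α

namespace BTree

variable {α : Type} [LinearOrder α]

/-- number of nodes -/
def size : BTree α → ℕ
  | nil => 0
  | node t _ u => size t + size u + 1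

/-- size plus one -/
def s (x : BTree α) : ℕ := size x + 1

def rank : BTree α → ℕ
  | nil => 0
  | node _ _ u => rank u + 1

/-- minor rank -/
def prank : BTree α → ℕ
  | nil => 0
  | node t _ _ => rank t + 1

/-- `a` is less than or equal to every label of the tree -/
def LeAll (a : α) : BTree α → Prop
  | nil => True
  | node t b u => a ≤ b ∧ LeAll a t ∧ LeAll a u

/-- heap property: every node's label is ≤ all labels in its subtrees -/
def IsHeap : BTree α → Prop
  | nil => True
  | node t a u => LeAll a t ∧ LeAll a u ∧ IsHeap t ∧ IsHeap u

/-- rank-biased leftist property -/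
def RankLeftist : BTree α → Prop
  | nil => True
  | node t _ u => rank u ≤ rank t ∧ RankLeftist t ∧ RankLeftist u

/-- weight-biased leftist property -/
def WeightLeftist : BTree α → Prop
  | nil => True
  | node t _ u => size u ≤ size t ∧ WeightLeftist t ∧ WeightLeftist u

/-- rank-biased balancing -/
def balR : BTree α → BTree α
  | nil => nil
  | node t a u => if rank u < rank t then node t a u else node u a t

/-- weight-biased balancing -/
def balW : BTree α → BTree α
  | nil => nil
  | node t a u => if size u < size t then node t a u else node u a t

/-- rank-biased merge -/
def mergeR : BTree α → BTree α → BTree α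
  | nil, nil => nil
  | nil, node v b w => balR (node v b (mergeR nil w))
  | node t a u, nil => balR (node t a (mergeR u nil))
  | node t a u, node v b w =>
      if a ≤ b then balR (node t a (mergeR u (node v b w)))
      else balR (node v b (mergeR (node t a u) w))
termination_by x y => rank x + rank y
decreasing_by all_goals simp [rank]

/-- weight-biased merge -/
def mergeW : BTree α → BTree α → BTree α
  | nil, nil => nil
  | nil, node v b w => balW (node v b (mergeW nil w))
  | node t a u, nil => balW (node t a (mergeW u nil))
  | node t a u, node v b w =>
      if a ≤ b then balW (node t a (mergeW u (node v b w)))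
      else balW (node v b (mergeW (node t a u) w))
termination_by x y => rank x + rank y
decreasing_by all_goals simp [rank]

/-- number of comparisons used when merging (independent of the balancing strategy) -/
def cost : BTree α → BTree α → ℕ
  | nil, nil => 0
  | nil, node _ _ w => cost nil w + 1
  | node _ _ u, nil => cost u nil + 1
  | node t a u, node v b w =>
      (if a ≤ b then cost u (node v b w) else cost (node t a u) w) + 1
termination_by x y => rank x + rank y
decreasing_by all_goals simp [rank]

theorem cost_eq (x y : BTree α) : cost x y = rank x + rank y := by
  induction x, y using cost.induct with
  | case1 => simp [cost, rank]
  | case2 v b w ih => simp [cost, rank] at *; omega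
  | case3 t a u ih => simp [cost, rank] at *; omega
  | case4 t a u v b w ih1 ih2 =>
    rw [cost]
    split <;> simp [rank, ih1, ih2] <;> omega

theorem size_balR (x : BTree α) : size (balR x) = size x := by
  cases x with
  | nil => rfl
  | node t a u => simp only [balR]; split <;> simp [size] <;> omega

theorem size_mergeR (x y : BTree α) : size (mergeR x y) = size x + size y := by
  induction x, y using mergeR.induct with
  | case1 => simp [mergeR, size]
  | case2 v b w ih => simp [mergeR, size_balR, size] at *; omega
  | case3 t a u ih => simp [mergeR, size_balR, size] at *; omega
  | case4 t a u v b w h ih => rw [mergeR, if_pos h]; simp [size_balR, size] at *; omega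
  | case5 t a u v b w h ih => rw [mergeR, if_neg h]; simp [size_balR, size] at *; omega

theorem rankLeftist_balR {t : BTree α} {a : α} {u : BTree α}
    (ht : RankLeftist t) (hu : RankLeftist u) : RankLeftist (balR (node t a u)) := by
  simp only [balR]; split <;> exact ⟨by omega, by assumption, by assumption⟩

theorem rankLeftist_mergeR {x y : BTree α} (hx : RankLeftist x) (hy : RankLeftist y) :
    RankLeftist (mergeR x y) := by
  induction x, y using mergeR.induct with
  | case1 => rw [mergeR]; trivial
  | case2 v b w ih =>
    obtain ⟨_, hv, hw⟩ := hy
    rw [mergeR]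
    exact rankLeftist_balR hv (ih trivial hw)
  | case3 t a u ih =>
    obtain ⟨_, ht, hu⟩ := hx
    rw [mergeR]
    exact rankLeftist_balR ht (ih hu trivial)
  | case4 t a u v b w h ih =>
    obtain ⟨_, ht, hu⟩ := hx
    rw [mergeR, if_pos h]
    exact rankLeftist_balR ht (ih hu hy)
  | case5 t a u v b w h ih =>
    obtain ⟨_, hv, hw⟩ := hy
    rw [mergeR, if_neg h]
    exact rankLeftist_balR hv (ih hx hw)

theorem pow_rank_le_s {x : BTree α} (hx : RankLeftist x) : 2 ^ rank x ≤ s x := by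
  induction x with
  | nil => simp [rank, s, size]
  | node t a u iht ihu =>
    obtain ⟨hr, ht, hu⟩ := hx
    have h1 := iht ht
    have h2 := ihu hu
    have h3 : 2 ^ rank u ≤ 2 ^ rank t := Nat.pow_le_pow_right (by norm_num) hr
    simp only [rank, s, size] at *
    calc 2 ^ (rank u + 1) = 2 ^ rank u + 2 ^ rank u := by ring
    _ ≤ (size t + 1) + (size u + 1) := Nat.add_le_add (h3.trans h1) h2
    _ = size t + size u + 1 + 1 := by omega

theorem nat_le_logb {n N : ℕ} (h : 2 ^ n ≤ N) : (n : ℝ) ≤ Real.logb 2 N := by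
  have h2 : ((2 : ℝ)) ^ n ≤ (N : ℝ) := by exact_mod_cast h
  have h3 : Real.logb 2 ((2 : ℝ) ^ n) ≤ Real.logb 2 N :=
    Real.logb_le_logb_of_le (by norm_num) (pow_pos two_pos n) h2
  simpa [Real.logb_pow] using h3

end BTree

/- With potential Φ(x) = rank(x), for every nonempty rank-biased leftist heap
x = ⟨t,a,u⟩ the amortized cost of delete-min A(x) = T(t,u) + Φ(t∪u) − Φ(x)
equals rank(t) + rank(t∪u) − 1 and is at most 2·log₂ s(x). -/
open BTree in
theorem amortized_deleteMin_rank_potential (α : Type) [LinearOrder α]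
    (t : BTree α) (a : α) (u : BTree α)
    (hh : IsHeap (node t a u)) (hl : RankLeftist (node t a u)) :
    (cost t u : ℝ) + (rank (mergeR t u) : ℝ) - (rank (node t a u) : ℝ)
        = (rank t : ℝ) + (rank (mergeR t u) : ℝ) - 1 ∧
    (cost t u : ℝ) + (rank (mergeR t u) : ℝ) - (rank (node t a u) : ℝ)
        ≤ 2 * Real.logb 2 (s (node t a u)) := by
  obtain ⟨_, _, _, _⟩ := hh
  obtain ⟨hr, ht, hu⟩ := hl
  have hc : cost t u = rank t + rank u := cost_eq t u
  have hrn : rank (node t a u) = rank u + 1 := rfl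
  have heq : (cost t u : ℝ) + (rank (mergeR t u) : ℝ) - (rank (node t a u) : ℝ)
      = (rank t : ℝ) + (rank (mergeR t u) : ℝ) - 1 := by
    rw [hc, hrn]; push_cast; ring
  refine ⟨heq, heq ▸ ?_⟩
  have hm : RankLeftist (mergeR t u) := rankLeftist_mergeR ht hu
  have h1 : 2 ^ rank t ≤ s (node t a u) := by
    have := pow_rank_le_s ht
    simp only [s, size] at *; omega
  have h2 : 2 ^ rank (mergeR t u) ≤ s (node t a u) := by
    have := pow_rank_le_s hm
    rw [s, size_mergeR] at this
    simp only [s, size]; omega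
  have l1 := nat_le_logb h1
  have l2 := nat_le_logb h2
  linarith
end

section
/- Define the potential Φ by Φ(⟨⟩) = 0 and Φ(⟨t,a,u⟩) = Φ(t) + p(t,u) + Φ(u), where p(t,u) = max(log_β(β·s(u)/(s(t)+s(u))), 0), β = φ^(φ+2), α = φ^(2φ−1), and φ = (√5+1)/2 is the golden ratio. Then for all weight-biased leftist heaps x and y, the amortized merge cost satisfies A(x,y) = T(x,y) + Φ(x∪y) − Φ(x) − Φ(y) ≤ log_α s(x∪y) + log_β s(x) + log_β s(y). -/
/-- the golden ratio φ = (√5 + 1)/2 -/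
noncomputable def goldPhi : ℝ := (Real.sqrt 5 + 1) / 2

/-- β = φ^(φ+2) -/
noncomputable def goldBeta : ℝ := goldPhi ^ (goldPhi + 2)

/-- α = φ^(2φ-1) -/
noncomputable def goldAlpha : ℝ := goldPhi ^ (2 * goldPhi - 1)

namespace BTree

variable {α : Type} [LinearOrder α]

/-- p(t,u) = max(log_β (β·s(u)/(s(t)+s(u))), 0) -/
noncomputable def p (t u : BTree α) : ℝ :=
  max (Real.logb goldBeta (goldBeta * (s u : ℝ) / ((s t : ℝ) + (s u : ℝ)))) 0

/-- the potential function Φ(⟨⟩) = 0, Φ(⟨t,a,u⟩) = Φ(t) + p(t,u) + Φ(u) -/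
noncomputable def Phi : BTree α → ℝ
  | nil => 0
  | node t _ u => Phi t + p t u + Phi u

end BTree


/-! The potential drop pays for one comparison on each step down the right spine. A step
at `⟨t, a, u⟩` replaces `p t u ≥ 1 + log_β (s u / (s t + s u))` by the potential of the
rebalanced node over `t` and `M = u ∪ y`, which is at most `log_α ((s t + s M) / s M)`. The
two logarithms telescope along the spine, and what remains is the inequality
`1 + log_β (1 - v) + log_α v ≤ 0` for `0 < v < 1`, obtained from `log x ≤ x - 1` at
`φ² (1 - v)` and at `φ v`. -/

open Real

lemma one_lt_goldPhi : 1 < goldPhi := by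
  unfold goldPhi
  nlinarith [sq_sqrt (show (0:ℝ) ≤ 5 by norm_num), sqrt_nonneg 5]

lemma goldPhi_pos : 0 < goldPhi := zero_lt_one.trans one_lt_goldPhi

lemma goldPhi_sq : goldPhi ^ 2 = goldPhi + 1 := by
  unfold goldPhi
  nlinarith [sq_sqrt (show (0:ℝ) ≤ 5 by norm_num)]

lemma log_goldBeta : log goldBeta = (goldPhi + 2) * log goldPhi := log_rpow goldPhi_pos _

lemma log_goldAlpha : log goldAlpha = (2 * goldPhi - 1) * log goldPhi := log_rpow goldPhi_pos _

lemma one_lt_goldBeta : 1 < goldBeta :=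
  one_lt_rpow one_lt_goldPhi (by linarith [one_lt_goldPhi])

lemma one_lt_goldAlpha : 1 < goldAlpha :=
  one_lt_rpow one_lt_goldPhi (by linarith [one_lt_goldPhi])

lemma one_add_logb_goldBeta_add_logb_goldAlpha_nonpos {v : ℝ} (hv0 : 0 < v) (hv1 : v < 1) :
    1 + logb goldBeta (1 - v) + logb goldAlpha v ≤ 0 := by
  have hL : 0 < log goldPhi := log_pos one_lt_goldPhi
  have hφ : 1 < goldPhi := one_lt_goldPhi
  have tangent_v : log v ≤ goldPhi * v - 1 - log goldPhi := by
    have h := log_le_sub_one_of_pos (mul_pos goldPhi_pos hv0)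
    rw [log_mul goldPhi_pos.ne' hv0.ne'] at h
    linarith
  have tangent_one_sub_v : log (1 - v) ≤ goldPhi ^ 2 * (1 - v) - 1 - 2 * log goldPhi := by
    have h := log_le_sub_one_of_pos (mul_pos (pow_pos goldPhi_pos 2) (sub_pos.mpr hv1))
    rw [log_mul (by positivity) (sub_pos.mpr hv1).ne', log_pow] at h
    push_cast at h
    linarith
  have hβ : 0 < (goldPhi + 2) * log goldPhi := by positivity
  have hα : 0 < (2 * goldPhi - 1) * log goldPhi := mul_pos (by linarith) hL
  -- the `v`-terms cancel because `φ² / (φ + 2) = φ / (2φ - 1)`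
  have tangents_sum :
      1 + (goldPhi ^ 2 * (1 - v) - 1 - 2 * log goldPhi) / ((goldPhi + 2) * log goldPhi)
        + (goldPhi * v - 1 - log goldPhi) / ((2 * goldPhi - 1) * log goldPhi) = 0 := by
    rw [add_assoc, div_add_div _ _ hβ.ne' hα.ne', one_add_div (mul_ne_zero hβ.ne' hα.ne'),
      div_eq_zero_iff, or_iff_left (mul_ne_zero hβ.ne' hα.ne')]
    linear_combination (log goldPhi * (2 * (1 - v) * goldPhi + 1 + 2 * log goldPhi)) * goldPhi_sq
  unfold logb
  rw [log_goldBeta, log_goldAlpha]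
  linarith [div_le_div_of_nonneg_right tangent_one_sub_v hβ.le,
    div_le_div_of_nonneg_right tangent_v hα.le]

lemma max_logb_goldBeta_le_logb_goldAlpha_sub {c d : ℝ} (hc : 0 < c) (hd : 0 < d) :
    max (logb goldBeta (goldBeta * min c d / (c + d))) 0
      ≤ logb goldAlpha (c + d) - logb goldAlpha d := by
  have hcd : 0 < c + d := add_pos hc hd
  refine max_le ?_ (sub_nonneg.mpr (logb_le_logb_of_le one_lt_goldAlpha hd (by linarith)))
  have hβ : 0 < goldBeta := zero_lt_one.trans one_lt_goldBeta
  calc logb goldBeta (goldBeta * min c d / (c + d))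
      ≤ logb goldBeta (goldBeta * (1 - d / (c + d))) := by
        refine logb_le_logb_of_le one_lt_goldBeta (by positivity) ?_
        rw [one_sub_div hcd.ne', add_sub_cancel_right, mul_div_assoc]
        gcongr
        exact min_le_left c d
    _ = 1 + logb goldBeta (1 - d / (c + d)) := by
        rw [logb_mul hβ.ne' (sub_pos.mpr ((div_lt_one hcd).mpr (by linarith))).ne',
          logb_self_eq_one one_lt_goldBeta]
    _ ≤ -logb goldAlpha (d / (c + d)) := by
        linarith [one_add_logb_goldBeta_add_logb_goldAlpha_nonpos (div_pos hd hcd)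
          ((div_lt_one hcd).mpr (by linarith))]
    _ = logb goldAlpha (c + d) - logb goldAlpha d := by
        rw [logb_div hd.ne' hcd.ne', neg_sub]

namespace BTree

variable {α : Type}

lemma s_node (t : BTree α) (a : α) (u : BTree α) : s (node t a u) = s t + s u := by
  simp only [s, size]; omega

lemma s_balW (x : BTree α) : s (balW x) = s x := by
  cases x with
  | nil => rfl
  | node t a u => simp only [balW]; split <;> simp only [s_node]; omega

lemma s_pos (x : BTree α) : (0 : ℝ) < s x := by
  simp only [s]; positivity

lemma Phi_balW (t : BTree α) (a : α) (M : BTree α) :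
    Phi (balW (node t a M)) = Phi t + Phi M
      + max (logb goldBeta (goldBeta * min (s t : ℝ) (s M) / (s t + s M))) 0 := by
  simp only [balW]
  split_ifs with h
  · rw [min_eq_right (by simp only [s]; exact_mod_cast Nat.succ_le_succ h.le)]
    simp only [Phi, p]; ring
  · rw [min_eq_left (by simp only [s]; exact_mod_cast Nat.succ_le_succ (not_lt.mp h)),
      add_comm (s t : ℝ)]
    simp only [Phi, p]; ring

lemma one_add_logb_sub_logb_le_p (t u : BTree α) :
    1 + logb goldBeta (s u) - logb goldBeta ((s t : ℝ) + s u) ≤ p t u := by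
  refine le_of_eq_of_le ?_ (le_max_left _ _)
  have hst := s_pos t
  have hsu := s_pos u
  rw [mul_div_assoc, logb_mul (zero_lt_one.trans one_lt_goldBeta).ne' (by positivity),
    logb_div hsu.ne' (by positivity), logb_self_eq_one one_lt_goldBeta]
  ring

lemma amortized_step {t u y M : BTree α} {a : α} {c : ℕ}
    (ih : (c : ℝ) + Phi M - Phi u - Phi y
      ≤ logb goldAlpha (s M) + logb goldBeta (s u) + logb goldBeta (s y)) :
    ((c + 1 : ℕ) : ℝ) + Phi (balW (node t a M)) - Phi (node t a u) - Phi y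
      ≤ logb goldAlpha (s (balW (node t a M))) + logb goldBeta (s (node t a u))
        + logb goldBeta (s y) := by
  rw [s_balW, Phi_balW]
  push_cast [s_node]
  simp only [Phi]
  linarith [max_logb_goldBeta_le_logb_goldAlpha_sub (s_pos t) (s_pos M),
    one_add_logb_sub_logb_le_p t u]

end BTree

open BTree in
theorem amortized_merge_weightBiased_general (α : Type) [LinearOrder α]
    (x y : BTree α) :
    (cost x y : ℝ) + Phi (mergeW x y) - Phi x - Phi y
      ≤ Real.logb goldAlpha (s (mergeW x y)) + Real.logb goldBeta (s x)
        + Real.logb goldBeta (s y) := by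
  induction x, y using mergeW.induct with
  | case1 => simp [cost, mergeW, Phi, s, size]
  | case2 v b w ih =>
    rw [mergeW, cost]
    linarith [amortized_step (t := v) (a := b) (u := w) (y := nil) (by linarith)]
  | case3 t a u ih =>
    rw [mergeW, cost]
    exact amortized_step ih
  | case4 t a u v b w hab ih =>
    rw [mergeW, cost, if_pos hab, if_pos hab]
    exact amortized_step ih
  | case5 t a u v b w hab ih =>
    rw [mergeW, cost, if_neg hab, if_neg hab]
    linarith [amortized_step (t := v) (a := b) (u := w) (y := node t a u) (by linarith)]

open BTree in
theorem amortized_merge_weightBiased (α : Type) [LinearOrder α]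
    (x y : BTree α) (hxh : IsHeap x) (hxl : WeightLeftist x)
    (hyh : IsHeap y) (hyl : WeightLeftist y) :
    (cost x y : ℝ) + Phi (mergeW x y) - Phi x - Phi y
      ≤ Real.logb goldAlpha (s (mergeW x y)) + Real.logb goldBeta (s x)
        + Real.logb goldBeta (s y) :=
  amortized_merge_weightBiased_general α x y
end
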